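/- Let γ be irrational with convergents p_n/q_n. If p/q is a rational number (q ∈ ℕ) lying strictly between p_{n-1}/q_{n-1} and p_{n+1}/q_{n+1}, then q|qγ - p| > 1/c_{n+1}, where c_{n+1} is the (n+1)-st partial quotient of γ. -/

import Mathlib

/-- Numerator of the `n`-th convergent of the continued fraction with
partial quotients `c`. -/
def convP (c : ℕ → ℤ) : ℕ → ℤ
  | 0 => c 0
  | 1 => c 1 * c 0 + 1
  | (n + 2) => c (n + 2) * convP c (n + 1) + convP c n

/-- Denominator of the `n`-th convergent of the continued fraction with
partial quotients `c`. -/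
def convQ (c : ℕ → ℤ) : ℕ → ℤ
  | 0 => 1
  | 1 => c 1
  | (n + 2) => c (n + 2) * convQ c (n + 1) + convQ c n

/-- `γ` has (infinite) continued fraction expansion `[c 0; c 1, c 2, ...]`:
all partial quotients with positive index are positive integers, and the
convergents tend to `γ`. -/
def IsCF (γ : ℝ) (c : ℕ → ℤ) : Prop :=
  (∀ n, 1 ≤ n → 1 ≤ c n) ∧
  Filter.Tendsto (fun n => (convP c n : ℝ) / (convQ c n : ℝ)) Filter.atTop (nhds γ)

/-!
Write `X k = p_k / q_k` and `m = n - 1`. Since `X (m + 2) - X m = ± c_{m+2} / (q_m q_{m+2})` and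
`p/q` lies strictly between them, `1 / (q q_m) ≤ |p/q - X m| < c_{m+2} / (q_m q_{m+2})`, i.e.
`q_{m+2} < c_{m+2} q`. The convergents of even and of odd index approach `γ` monotonically from
opposite sides, so `γ` lies beyond `X (m + 2)` as seen from `p/q`, whence
`|γ - p/q| > |X (m + 2) - p/q| ≥ 1 / (q q_{m+2}) > 1 / (c_{m+2} q²)`.
-/

open Filter Topology

lemma convQ_pos {c : ℕ → ℤ} (hc : ∀ n, 1 ≤ n → 1 ≤ c n) : ∀ n, 0 < convQ c n
  | 0 => by simp [convQ]
  | 1 => by have := hc 1 le_rfl; simp only [convQ]; omega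
  | n + 2 => by
    have := convQ_pos hc n
    have := convQ_pos hc (n + 1)
    have := hc (n + 2) (by omega)
    simp only [convQ]
    nlinarith

lemma convP_succ_mul_convQ_sub (c : ℕ → ℤ) :
    ∀ n, convP c (n + 1) * convQ c n - convP c n * convQ c (n + 1) = (-1) ^ n
  | 0 => by simp only [convP, convQ]; ring
  | n + 1 => by
    have ih := convP_succ_mul_convQ_sub c n
    simp only [convP, convQ]
    linear_combination -ih

lemma convP_add_two_mul_convQ_sub (c : ℕ → ℤ) (n : ℕ) :
    convP c (n + 2) * convQ c n - convP c n * convQ c (n + 2) = c (n + 2) * (-1) ^ n := by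
  simp only [convP, convQ]
  linear_combination c (n + 2) * convP_succ_mul_convQ_sub c n

lemma neg_one_pow_mul_conv_add_two_sub {c : ℕ → ℤ} (hc : ∀ n, 1 ≤ n → 1 ≤ c n) (n : ℕ) :
    (-1 : ℝ) ^ n * ((convP c (n + 2) : ℝ) / convQ c (n + 2) - (convP c n : ℝ) / convQ c n) =
      c (n + 2) / ((convQ c n : ℝ) * convQ c (n + 2)) := by
  have hQ : (convQ c n : ℝ) ≠ 0 := by exact_mod_cast (convQ_pos hc n).ne'
  have hQ₂ : (convQ c (n + 2) : ℝ) ≠ 0 := by exact_mod_cast (convQ_pos hc (n + 2)).ne'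
  have hdet : (convP c (n + 2) * convQ c n - convP c n * convQ c (n + 2) : ℝ) =
      c (n + 2) * (-1) ^ n := by exact_mod_cast convP_add_two_mul_convQ_sub c n
  have hsq : ((-1 : ℝ) ^ n) ^ 2 = 1 := by rw [← pow_mul, pow_mul', neg_one_sq, one_pow]
  field_simp
  linear_combination (-1 : ℝ) ^ n * hdet + c (n + 2) * hsq

lemma neg_one_pow_mul_conv_add_two_sub_pos {c : ℕ → ℤ} (hc : ∀ n, 1 ≤ n → 1 ≤ c n) (n : ℕ) :
    0 < (-1 : ℝ) ^ n * ((convP c (n + 2) : ℝ) / convQ c (n + 2) - (convP c n : ℝ) / convQ c n) := by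
  have : (0 : ℝ) < c (n + 2) := by exact_mod_cast hc (n + 2) (by omega)
  have : (0 : ℝ) < convQ c n := by exact_mod_cast convQ_pos hc n
  have : (0 : ℝ) < convQ c (n + 2) := by exact_mod_cast convQ_pos hc (n + 2)
  rw [neg_one_pow_mul_conv_add_two_sub hc]
  positivity

lemma abs_conv_add_two_sub {c : ℕ → ℤ} (hc : ∀ n, 1 ≤ n → 1 ≤ c n) (n : ℕ) :
    |(convP c (n + 2) : ℝ) / convQ c (n + 2) - (convP c n : ℝ) / convQ c n| =
      c (n + 2) / ((convQ c n : ℝ) * convQ c (n + 2)) := by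
  rw [← neg_one_pow_mul_conv_add_two_sub hc,
    ← abs_of_pos (neg_one_pow_mul_conv_add_two_sub_pos hc n), abs_mul, abs_neg_one_pow, one_mul]

/-- Even-indexed convergents lie below `γ`, odd-indexed ones above. -/
lemma IsCF.neg_one_pow_mul_sub_conv_pos {γ : ℝ} (hγ : Irrational γ) {c : ℕ → ℤ}
    (hcf : IsCF γ c) (n : ℕ) :
    0 < (-1 : ℝ) ^ n * (γ - (convP c n : ℝ) / convQ c n) := by
  obtain ⟨hc, hlim⟩ := hcf
  set X : ℕ → ℝ := fun k => (convP c k : ℝ) / convQ c k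
  have hmono : Monotone fun k => (-1 : ℝ) ^ n * X (n + 2 * k) := by
    refine monotone_nat_of_le_succ fun k => ?_
    have hstep := neg_one_pow_mul_conv_add_two_sub_pos hc (n + 2 * k)
    rw [pow_add, pow_mul, neg_one_sq, one_pow, mul_one] at hstep
    simp only [X, show n + 2 * (k + 1) = n + 2 * k + 2 by ring]
    linarith
  have htends : Tendsto (fun k => (-1 : ℝ) ^ n * X (n + 2 * k)) atTop (𝓝 ((-1) ^ n * γ)) :=
    (hlim.comp (tendsto_atTop_mono (fun k => show k ≤ n + 2 * k by omega) tendsto_id)).const_mul _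
  have hle : (-1 : ℝ) ^ n * X n ≤ (-1) ^ n * γ := by simpa using hmono.ge_of_tendsto htends 0
  have hne : γ - X n ≠ 0 := sub_ne_zero.mpr fun h => hγ ⟨convP c n / convQ c n, by simp [h, X]⟩
  exact lt_of_le_of_ne (by linarith) (Ne.symm (mul_ne_zero (by simp) hne))

/-- The convergent of index `n + 2` lies strictly between the one of index `n` and `γ`. -/
lemma IsCF.sub_conv_mul_conv_sub_pos {γ : ℝ} (hγ : Irrational γ) {c : ℕ → ℤ}
    (hcf : IsCF γ c) (n : ℕ) :
    0 < (γ - (convP c (n + 2) : ℝ) / convQ c (n + 2)) *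
      ((convP c (n + 2) : ℝ) / convQ c (n + 2) - (convP c n : ℝ) / convQ c n) := by
  have hbeyond := hcf.neg_one_pow_mul_sub_conv_pos hγ (n + 2)
  rw [pow_add, neg_one_sq, mul_one] at hbeyond
  have := mul_pos hbeyond (neg_one_pow_mul_conv_add_two_sub_pos hcf.1 n)
  rwa [mul_mul_mul_comm, ← mul_pow, neg_one_mul, neg_neg, one_pow, one_mul] at this

lemma one_div_mul_le_abs_div_sub_div {a b d e : ℤ} (hb : 0 < b) (hd : 0 < d)
    (hne : (a : ℝ) / b ≠ e / d) : 1 / ((b : ℝ) * d) ≤ |(a : ℝ) / b - e / d| := by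
  have hbd : (0 : ℝ) < b * d := by positivity
  have hnum : a * d - b * e ≠ 0 := fun h => hne <| by
    rw [div_eq_div_iff (by positivity) (by positivity)]
    exact_mod_cast (by linarith : a * d = e * b)
  have hone : (1 : ℝ) ≤ |(a * d - b * e : ℝ)| := by
    exact_mod_cast Int.one_le_abs hnum
  rw [div_sub_div _ _ (by positivity) (by positivity), abs_div, abs_of_pos hbd]
  exact div_le_div_of_nonneg_right hone hbd.le

/-- `hg` says that `g` lies strictly beyond `y` as seen from `x`. -/
lemma one_div_lt_sq_mul_abs_sub {x y r g q Q Q' c : ℝ} (hq : 0 < q) (hQ : 0 < Q) (hQ' : 0 < Q')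
    (hxy : |y - x| = c / (Q * Q')) (hr : x < r ∧ r < y ∨ y < r ∧ r < x)
    (hg : 0 < (g - y) * (y - x)) (hx : 1 / (q * Q) ≤ |r - x|) (hy : 1 / (Q' * q) ≤ |y - r|) :
    1 / c < q ^ 2 * |g - r| := by
  have hdist : |r - x| < |y - x| ∧ |y - r| < |g - r| := by
    rcases hr with ⟨h₁, h₂⟩ | ⟨h₁, h₂⟩
    · have : y < g := by nlinarith
      rw [abs_of_pos (by linarith : 0 < r - x), abs_of_pos (by linarith : 0 < y - x),
        abs_of_pos (by linarith : 0 < y - r), abs_of_pos (by linarith : 0 < g - r)]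
      constructor <;> linarith
    · have : g < y := by nlinarith
      rw [abs_of_neg (by linarith : r - x < 0), abs_of_neg (by linarith : y - x < 0),
        abs_of_neg (by linarith : y - r < 0), abs_of_neg (by linarith : g - r < 0)]
      constructor <;> linarith
  have hc : 0 < c := by
    have := (abs_nonneg (r - x)).trans_lt hdist.1
    rw [hxy] at this
    exact (div_pos_iff_of_pos_right (by positivity)).mp this
  have hQ'_lt : Q' < c * q := by
    have := hx.trans_lt (hdist.1.trans_eq hxy)
    rw [div_lt_div_iff₀ (by positivity) (by positivity)] at this
    nlinarith
  calc 1 / c < q / Q' := by rw [div_lt_div_iff₀ hc hQ']; linarith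
    _ = q ^ 2 * (1 / (Q' * q)) := by field_simp
    _ ≤ q ^ 2 * |y - r| := by gcongr
    _ < q ^ 2 * |g - r| := by gcongr; exact hdist.2

theorem stmt_12 (γ : ℝ) (hγ : Irrational γ) (c : ℕ → ℤ) (hcf : IsCF γ c)
    (n : ℕ) (hn : 1 ≤ n) (p : ℤ) (q : ℕ) (hq : 0 < q)
    (hbetween :
      ((convP c (n - 1) : ℝ) / (convQ c (n - 1) : ℝ) < (p : ℝ) / (q : ℝ) ∧
        (p : ℝ) / (q : ℝ) < (convP c (n + 1) : ℝ) / (convQ c (n + 1) : ℝ)) ∨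
      ((convP c (n + 1) : ℝ) / (convQ c (n + 1) : ℝ) < (p : ℝ) / (q : ℝ) ∧
        (p : ℝ) / (q : ℝ) < (convP c (n - 1) : ℝ) / (convQ c (n - 1) : ℝ))) :
    (q : ℝ) * |(q : ℝ) * γ - (p : ℝ)| > 1 / (c (n + 1) : ℝ) := by
  obtain ⟨m, rfl⟩ : ∃ m, n = m + 1 := ⟨n - 1, by omega⟩
  simp only [Nat.add_sub_cancel] at hbetween
  set x : ℝ := convP c m / convQ c m
  set y : ℝ := convP c (m + 2) / convQ c (m + 2)
  set r : ℝ := p / q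
  have hqZ : (0 : ℤ) < q := by exact_mod_cast hq
  have hQ := convQ_pos hcf.1 m
  have hQ₂ := convQ_pos hcf.1 (m + 2)
  have hxr : r ≠ x := by rcases hbetween with h | h; exacts [h.1.ne', h.2.ne]
  have hyr : y ≠ r := by rcases hbetween with h | h; exacts [h.2.ne', h.1.ne]
  calc 1 / (c (m + 2) : ℝ) < (q : ℝ) ^ 2 * |γ - r| :=
        one_div_lt_sq_mul_abs_sub (Nat.cast_pos.mpr hq) (Int.cast_pos.mpr hQ)
          (Int.cast_pos.mpr hQ₂) (abs_conv_add_two_sub hcf.1 m) hbetween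
          (hcf.sub_conv_mul_conv_sub_pos hγ m)
          (by simpa [r, x] using one_div_mul_le_abs_div_sub_div hqZ hQ (by push_cast; exact hxr))
          (by simpa [r, y] using one_div_mul_le_abs_div_sub_div hQ₂ hqZ (by push_cast; exact hyr))
    _ = q * |q * γ - p| := by
      rw [show (q : ℝ) * γ - p = q * (γ - r) by simp only [r]; field_simp, abs_mul,
        Nat.abs_cast]
      ring
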